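/- arXiv:2003.00589 — 6 statements merged into one kernel-verified Lean document; each statement's English description precedes it below -/
import Mathlib

section
/- If M > L > k ≥ 2 are integers such that M ≥ L²/3, then binom(M, k) ≥ binom(L, k+1). -/
/-!
For `L ≤ M` we have `C(L, k) / C(M, k) ≤ (L / M) ^ k`, and
`C(L, k + 1) = C(L, k) (L - k) / (k + 1)`. Bounding `M ^ k` below by `(L ^ 2 / 3) ^ k`, it suffices
that `3 ^ k (L - k) ≤ (k + 1) L ^ k`, which holds as soon as `k + 1 ≥ 3` and `L ≥ 3`.
When `L ≤ k` the left side `C(L, k + 1)` vanishes, and otherwise `L ≥ 3` forces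
`L ≤ L ^ 2 / 3 ≤ M`.
-/

namespace Nat

theorem descFactorial_mul_pow_le_descFactorial_mul_pow {L M : ℕ} (hLM : L ≤ M) (k : ℕ) :
    L.descFactorial k * M ^ k ≤ M.descFactorial k * L ^ k := by
  induction k with
  | zero => simp
  | succ k ih =>
    have hstep : (L - k) * M ≤ (M - k) * L := by
      rcases le_or_gt L k with hkL | hkL
      · simp [Nat.sub_eq_zero_of_le hkL]
      · zify [hkL.le, hkL.le.trans hLM]
        nlinarith
    calc L.descFactorial (k + 1) * M ^ (k + 1)
        = ((L - k) * M) * (L.descFactorial k * M ^ k) := by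
          rw [descFactorial_succ, pow_succ]; ring
      _ ≤ ((M - k) * L) * (M.descFactorial k * L ^ k) := Nat.mul_le_mul hstep ih
      _ = M.descFactorial (k + 1) * L ^ (k + 1) := by
          rw [descFactorial_succ, pow_succ]; ring

theorem choose_mul_pow_le_choose_mul_pow {L M : ℕ} (hLM : L ≤ M) (k : ℕ) :
    L.choose k * M ^ k ≤ M.choose k * L ^ k := by
  have h := descFactorial_mul_pow_le_descFactorial_mul_pow hLM k
  rw [descFactorial_eq_factorial_mul_choose, descFactorial_eq_factorial_mul_choose,
    mul_assoc, mul_assoc] at h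
  exact Nat.le_of_mul_le_mul_left h (factorial_pos k)

theorem three_pow_mul_le_succ_mul_pow {k L : ℕ} (hk : 2 ≤ k) (hL : 3 ≤ L) :
    3 ^ k * L ≤ (k + 1) * L ^ k := by
  obtain ⟨j, rfl⟩ : ∃ j, k = j + 1 := ⟨k - 1, by omega⟩
  calc 3 ^ (j + 1) * L = 3 * 3 ^ j * L := by ring
    _ ≤ (j + 1 + 1) * L ^ j * L := by gcongr; omega
    _ = (j + 1 + 1) * L ^ (j + 1) := by ring

theorem choose_succ_le_choose_of_sq_le_three_mul {M L k : ℕ} (hk : 2 ≤ k)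
    (h : L ^ 2 ≤ 3 * M) : L.choose (k + 1) ≤ M.choose k := by
  rcases le_or_gt L k with hLk | hkL
  · simp [choose_eq_zero_of_lt (Nat.lt_succ_of_le hLk)]
  have hL : 3 ≤ L := by omega
  have hLM : L ≤ M := by nlinarith
  have hpos : 0 < (k + 1) * (3 ^ k * M ^ k) := by
    have : 0 < M := by omega
    positivity
  refine Nat.le_of_mul_le_mul_right ?_ hpos
  calc L.choose (k + 1) * ((k + 1) * (3 ^ k * M ^ k))
      = L.choose k * M ^ k * (3 ^ k * (L - k)) := by
        rw [← mul_assoc, choose_succ_right_eq]; ring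
    _ ≤ M.choose k * L ^ k * (3 ^ k * L) :=
        Nat.mul_le_mul (choose_mul_pow_le_choose_mul_pow hLM k)
          (Nat.mul_le_mul_left _ (Nat.sub_le L k))
    _ ≤ M.choose k * L ^ k * ((k + 1) * L ^ k) :=
        Nat.mul_le_mul_left _ (three_pow_mul_le_succ_mul_pow hk hL)
    _ = M.choose k * (k + 1) * (L ^ 2) ^ k := by ring
    _ ≤ M.choose k * (k + 1) * (3 * M) ^ k := by gcongr
    _ = M.choose k * ((k + 1) * (3 ^ k * M ^ k)) := by rw [mul_pow]; ring

end Nat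

theorem choose_ge_choose_of_sq_div_three_general (M L k : ℕ) (hk : 2 ≤ k)
    (h : ((L : ℝ) ^ 2) / 3 ≤ (M : ℝ)) :
    L.choose (k + 1) ≤ M.choose k := by
  have hsq : L ^ 2 ≤ 3 * M := by
    have : (L : ℝ) ^ 2 ≤ 3 * M := by linarith
    exact_mod_cast this
  exact Nat.choose_succ_le_choose_of_sq_le_three_mul hk hsq

theorem choose_ge_choose_of_sq_div_three (M L k : ℕ) (hk : 2 ≤ k) (hLk : k < L)
    (hML : L < M) (h : ((L : ℝ) ^ 2) / 3 ≤ (M : ℝ)) :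
    L.choose (k + 1) ≤ M.choose k :=
  choose_ge_choose_of_sq_div_three_general M L k hk h
end

section
/- Define ℓ_n recursively by ℓ_0 = 3 and ℓ_{n+1} = 1 + Σ_{j=0}^{n} (-1)^j * binom(ℓ_{n-j}, j+2). Then for all n ≥ 0, ℓ_n²/3 ≤ ℓ_{n+1} ≤ ℓ_n²/2. -/
/-!
If `b ^ 2 ≤ 3 a` then `C(b, k+1) ≤ C(a, k)` for `k ≥ 2`, since `(k+1) C(b, k+1) = (b-k) C(b, k)`
and `a C(b, k) ≤ b C(a, k)`. So, as long as `ℓ_m ^ 2 ≤ 3 ℓ_{m+1}` holds below `n`, the terms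
`C(ℓ_{n-j}, j+2)` of the recurrence decrease in `j`, and the alternating sum lies between its first
term and the sum of its first two: `C(ℓ_n, 2) - C(ℓ_{n-1}, 3) ≤ ℓ_{n+1} - 1 ≤ C(ℓ_n, 2)`.
The right inequality gives `ℓ_{n+1} ≤ ℓ_n ^ 2 / 2`. On the left, `C(ℓ_{n-1}, 3) ≤ ℓ_{n-1} ^ 3 / 6`
is negligible against `ℓ_n ^ 2 ≥ ℓ_{n-1} ^ 4 / 9` once `ℓ_{n-1} ≥ 10`, which gives
`ℓ_n ^ 2 ≤ 3 ℓ_{n+1}` and carries a strong induction.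
-/

open Finset

theorem sum_range_succ_alternating {R : Type*} [Ring R] (f : ℕ → R) (n : ℕ) :
    ∑ j ∈ range (n + 1), (-1) ^ j * f j = f 0 - ∑ j ∈ range n, (-1) ^ j * f (j + 1) := by
  simp only [sum_range_succ', pow_succ, pow_zero, one_mul, mul_neg_one, neg_mul, sum_neg_distrib]
  abel

section AlternatingSum

variable {R : Type*} [CommRing R] [LinearOrder R] [IsStrictOrderedRing R]

theorem alternating_sum_nonneg_and_le {f : ℕ → R} {n : ℕ} (hf : ∀ i, 0 ≤ f i)
    (hanti : ∀ i, i + 1 < n → f (i + 1) ≤ f i) :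
    0 ≤ ∑ j ∈ range n, (-1) ^ j * f j ∧ ∑ j ∈ range n, (-1) ^ j * f j ≤ f 0 := by
  induction n generalizing f with
  | zero => simpa using hf 0
  | succ n ih =>
    rcases Nat.eq_zero_or_pos n with rfl | hn
    · simpa using hf 0
    obtain ⟨hnonneg, hle⟩ := ih (f := fun i ↦ f (i + 1)) (fun i ↦ hf _)
      (fun i hi ↦ hanti (i + 1) (by omega))
    have h10 := hanti 0 (by omega)
    rw [sum_range_succ_alternating]
    constructor <;> linarith

theorem sub_le_alternating_sum_and_le {f : ℕ → R} {n : ℕ} (hf : ∀ i, 0 ≤ f i)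
    (hanti : ∀ i < n, f (i + 1) ≤ f i) :
    f 0 - f 1 ≤ ∑ j ∈ range (n + 1), (-1) ^ j * f j ∧
      ∑ j ∈ range (n + 1), (-1) ^ j * f j ≤ f 0 := by
  obtain ⟨hnonneg, hle⟩ := alternating_sum_nonneg_and_le (f := fun i ↦ f (i + 1)) (n := n)
    (fun i ↦ hf _) (fun i hi ↦ hanti (i + 1) (by omega))
  rw [sum_range_succ_alternating]
  constructor <;> linarith

end AlternatingSum

namespace Nat

theorem mul_choose_le_mul_choose {a b k : ℕ} (hk : 1 ≤ k) (hba : b ≤ a) :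
    a * b.choose k ≤ b * a.choose k := by
  obtain ⟨k, rfl⟩ := Nat.exists_eq_add_of_le' hk
  rcases b with _ | b
  · simp
  obtain ⟨a, rfl⟩ := Nat.exists_eq_add_of_le' (Nat.one_le_of_lt hba)
  refine Nat.le_of_mul_le_mul_left ?_ k.succ_pos
  calc (k + 1) * ((a + 1) * (b + 1).choose (k + 1))
      = (a + 1) * ((b + 1) * b.choose k) := by rw [add_one_mul_choose_eq]; ring
    _ ≤ (a + 1) * ((b + 1) * a.choose k) := by gcongr; omega
    _ = (b + 1) * ((a + 1) * a.choose k) := by ring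
    _ = (k + 1) * ((b + 1) * (a + 1).choose (k + 1)) := by rw [add_one_mul_choose_eq]; ring

theorem choose_succ_le_choose_of_sq_le {a b k : ℕ} (hk : 2 ≤ k) (hab : b ^ 2 ≤ 3 * a) :
    b.choose (k + 1) ≤ a.choose k := by
  rcases Nat.eq_zero_or_pos b with rfl | hb
  · simp
  have hba : b ≤ a := by
    by_contra! h
    nlinarith [sq_nonneg (2 * (b : ℤ) - 3)]
  refine Nat.le_of_mul_le_mul_left ?_ (Nat.mul_pos k.succ_pos hb)
  calc (k + 1) * b * b.choose (k + 1) = b * (b.choose k * (b - k)) := by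
        rw [← choose_succ_right_eq]; ring
    _ ≤ b * (b.choose k * b) := by gcongr; omega
    _ = b ^ 2 * b.choose k := by ring
    _ ≤ 3 * (a * b.choose k) := by rw [← mul_assoc]; gcongr
    _ ≤ 3 * (b * a.choose k) := Nat.mul_le_mul_left 3 (mul_choose_le_mul_choose (by omega) hba)
    _ = 3 * b * a.choose k := by ring
    _ ≤ (k + 1) * b * a.choose k := by gcongr; omega

end Nat

theorem choose_alternating_sum_bounds (a : ℕ → ℕ) (N : ℕ)
    (ha : ∀ m < N, a m ^ 2 ≤ 3 * a (m + 1)) :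
    ((a N).choose 2 : ℤ) - (a (N - 1)).choose 3 ≤
        ∑ j ∈ range (N + 1), (-1) ^ j * ((a (N - j)).choose (j + 2) : ℤ) ∧
      ∑ j ∈ range (N + 1), (-1) ^ j * ((a (N - j)).choose (j + 2) : ℤ) ≤ (a N).choose 2 := by
  have hanti : ∀ i < N, ((a (N - (i + 1))).choose (i + 1 + 2) : ℤ) ≤ (a (N - i)).choose (i + 2) := by
    intro i hi
    have h := ha (N - (i + 1)) (by omega)
    rw [show N - (i + 1) + 1 = N - i by omega] at h
    exact_mod_cast Nat.choose_succ_le_choose_of_sq_le (by omega) h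
  exact sub_le_alternating_sum_and_le (f := fun j ↦ ((a (N - j)).choose (j + 2) : ℤ))
    (fun i ↦ by positivity) hanti

theorem sq_le_three_mul_of_ge_one_add_choose_sub {x y L : ℤ} (hy : 10 ≤ y)
    (hxy : y ^ 2 ≤ 3 * x) (hL : 1 + (x.toNat.choose 2 : ℤ) - y.toNat.choose 3 ≤ L) :
    x ^ 2 ≤ 3 * L := by
  lift x to ℕ using by nlinarith
  lift y to ℕ using by linarith
  rw [Int.toNat_natCast, Int.toNat_natCast] at hL
  have hx2 : (x.choose 2 : ℚ) = x * (x - 1) / 2 := Nat.cast_choose_two ℚ x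
  have hy3 : (y.choose 3 : ℚ) ≤ y ^ 3 / 6 := Nat.choose_le_pow_div 3 y
  qify at hy hxy hL ⊢
  have hx9 : 0 ≤ 3 * (x : ℚ) + y ^ 2 - 9 := by nlinarith
  nlinarith [mul_nonneg (sub_nonneg.2 hxy) hx9,
    mul_nonneg (sq_nonneg (y : ℚ)) (mul_nonneg (by positivity : (0 : ℚ) ≤ y) (sub_nonneg.2 hy))]

theorem two_mul_le_sq_of_le_one_add_choose_two {x L : ℤ} (hx : 2 ≤ x)
    (hL : L ≤ 1 + x.toNat.choose 2) : 2 * L ≤ x ^ 2 := by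
  lift x to ℕ using by linarith
  rw [Int.toNat_natCast] at hL
  have hx2 : (x.choose 2 : ℚ) = x * (x - 1) / 2 := Nat.cast_choose_two ℚ x
  qify at hx hL ⊢
  nlinarith

section Recurrence

variable {ℓ : ℕ → ℤ} (h0 : ℓ 0 = 3)
  (hrec : ∀ n : ℕ, ℓ (n + 1) =
    1 + ∑ j ∈ range (n + 1), (-1) ^ j * ((ℓ (n - j)).toNat.choose (j + 2) : ℤ))
include hrec

theorem ell_succ_bounds (N : ℕ) (h : ∀ m < N, 3 ≤ ℓ m ∧ ℓ m ^ 2 ≤ 3 * ℓ (m + 1)) :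
    1 + ((ℓ N).toNat.choose 2 : ℤ) - (ℓ (N - 1)).toNat.choose 3 ≤ ℓ (N + 1) ∧
      ℓ (N + 1) ≤ 1 + (ℓ N).toNat.choose 2 := by
  have ha : ∀ m < N, (ℓ m).toNat ^ 2 ≤ 3 * (ℓ (m + 1)).toNat := by
    intro m hm
    obtain ⟨h3, hsq⟩ := h m hm
    rw [← Int.toNat_of_nonneg (by omega : 0 ≤ ℓ m),
      ← Int.toNat_of_nonneg (by nlinarith : 0 ≤ ℓ (m + 1))] at hsq
    exact_mod_cast hsq
  obtain ⟨hlo, hhi⟩ := choose_alternating_sum_bounds (fun m ↦ (ℓ m).toNat) N ha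
  rw [hrec]
  constructor <;> linarith

include h0

theorem ell_one_to_four : ℓ 1 = 4 ∧ ℓ 2 = 6 ∧ ℓ 3 = 12 ∧ ℓ 4 = 48 := by
  have h1 : ℓ 1 = 4 := by simpa [h0] using hrec 0
  have h2 : ℓ 2 = 6 := by simpa [sum_range_succ, Nat.choose, h0, h1] using hrec 1
  have h3 : ℓ 3 = 12 := by simpa [sum_range_succ, Nat.choose, h0, h1, h2] using hrec 2
  have h4 : ℓ 4 = 48 := by simpa [sum_range_succ, Nat.choose, h0, h1, h2, h3] using hrec 3
  exact ⟨h1, h2, h3, h4⟩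

theorem three_le_ell_and_sq_le (N : ℕ) : 3 ≤ ℓ N ∧ ℓ N ^ 2 ≤ 3 * ℓ (N + 1) := by
  induction N using Nat.strong_induction_on with
  | _ N ih =>
  obtain ⟨h1, h2, h3, h4⟩ := ell_one_to_four h0 hrec
  -- `ℓ 4 = ℓ 3 ^ 2 / 3` exactly, so the two-term lower bound below is too weak for `N ≤ 3`.
  rcases lt_or_ge N 4 with hN | hN
  · interval_cases N <;> norm_num [h0, h1, h2, h3, h4]
  have h12 : ∀ m, 3 ≤ m → m < N → 12 ≤ ℓ m := by
    intro m hm3 hmN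
    induction m, hm3 using Nat.le_induction with
    | base => exact h3.ge
    | succ m _ ihm => nlinarith [ihm (by omega), ih m (by omega)]
  obtain ⟨-, hyx⟩ := ih (N - 1) (by omega)
  rw [Nat.sub_add_cancel (by omega)] at hyx
  have hy := h12 (N - 1) (by omega) (by omega)
  obtain ⟨hlo, -⟩ := ell_succ_bounds hrec N ih
  exact ⟨by nlinarith, sq_le_three_mul_of_ge_one_add_choose_sub (by omega) hyx hlo⟩

theorem two_mul_ell_succ_le_sq (n : ℕ) : 2 * ℓ (n + 1) ≤ ℓ n ^ 2 := by
  obtain ⟨-, hhi⟩ := ell_succ_bounds hrec n fun m _ ↦ three_le_ell_and_sq_le h0 hrec m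
  exact two_mul_le_sq_of_le_one_add_choose_two (by linarith [three_le_ell_and_sq_le h0 hrec n]) hhi

end Recurrence

theorem ell_growth (ℓ : ℕ → ℤ) (h0 : ℓ 0 = 3)
    (hrec : ∀ n : ℕ, ℓ (n + 1) =
      1 + ∑ j ∈ Finset.range (n + 1), (-1) ^ j * ((ℓ (n - j)).toNat.choose (j + 2) : ℤ)) (n : ℕ) :
    ((ℓ n : ℚ) ^ 2) / 3 ≤ (ℓ (n + 1) : ℚ) ∧ (ℓ (n + 1) : ℚ) ≤ ((ℓ n : ℚ) ^ 2) / 2 := by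
  have hlow : (ℓ n : ℚ) ^ 2 ≤ 3 * ℓ (n + 1) := by
    exact_mod_cast (three_le_ell_and_sq_le h0 hrec n).2
  have hup : 2 * (ℓ (n + 1) : ℚ) ≤ ℓ n ^ 2 := by exact_mod_cast two_mul_ell_succ_le_sq h0 hrec n
  constructor <;> linarith
end

section
/- Define ℓ_n recursively by ℓ_0 = 3 and ℓ_{n+1} = 1 + Σ_{j=0}^{n} (-1)^j * binom(ℓ_{n-j}, j+2). Then lim_{n→∞} ℓ_{n+1}/ℓ_n² = 1/2. -/
/-!
Split off the leading term: `ℓ (n + 2) = 1 + C(ℓ (n + 1), 2) - T n`, where the alternating tail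
`T n` involves only `ℓ 0, …, ℓ n`. While `ℓ` increases with `ℓ k ^ 2 ≤ 4 ℓ (k + 1)`, the term
`C(ℓ (n - j), j + 3)` of the tail is at most `4 ^ (j + 3) / (j + 3)! * ℓ n ^ 3`, so
`|T n| ≤ e⁴ ℓ n ^ 3 ≤ 16 e⁴ ℓ (n + 1) ^ 2 / ℓ n`. Once `ℓ n` is large the tail is therefore
negligible against `ℓ (n + 1) ^ 2 / 2`: this propagates the two growth conditions (verified directly
for small `n`) and gives `ℓ (n + 2) / ℓ (n + 1) ^ 2 = 1 / 2 + O(1 / ℓ n)`.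
-/

open Filter Finset Real
open scoped Nat

theorem pow_le_four_pow_mul_pow_three {R : Type*} [CommRing R] [LinearOrder R]
    [IsStrictOrderedRing R] {x : ℕ → R} {n : ℕ} (hx0 : 1 ≤ x 0)
    (hmono : MonotoneOn x (Set.Iic n)) (hsq : ∀ k < n, x k ^ 2 ≤ 4 * x (k + 1)) :
    ∀ j ≤ n, x (n - j) ^ (j + 3) ≤ 4 ^ (j + 3) * x n ^ 3 := by
  have hone : ∀ k ≤ n, 1 ≤ x k := fun k hk =>
    hx0.trans (hmono (Set.mem_Iic.2 (Nat.zero_le n)) (Set.mem_Iic.2 hk) (Nat.zero_le k))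
  have hxn : 0 ≤ x n ^ 3 := pow_nonneg (zero_le_one.trans (hone n le_rfl)) 3
  intro j hj
  induction j with
  | zero => exact le_mul_of_one_le_left hxn (by norm_num)
  | succ j ih =>
    set c := x (n - (j + 1))
    set b := x (n - j)
    have hc : 0 ≤ c := zero_le_one.trans (hone _ (Nat.sub_le n _))
    have hb : 0 ≤ b := zero_le_one.trans (hone _ (Nat.sub_le n _))
    have hcb : c ^ 2 ≤ 4 * b := by
      simpa [show n - (j + 1) + 1 = n - j by omega] using hsq (n - (j + 1)) (by omega)
    have hbn : b ≤ x n ^ 3 :=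
      (hmono (Set.mem_Iic.2 (Nat.sub_le n j)) (Set.mem_Iic.2 le_rfl) (Nat.sub_le n j)).trans
        (le_self_pow₀ (hone n le_rfl) (by norm_num))
    refine (pow_le_pow_iff_left₀ (pow_nonneg hc _) (by positivity) two_ne_zero).1 ?_
    calc (c ^ (j + 1 + 3)) ^ 2 = (c ^ 2) ^ (j + 4) := by ring
      _ ≤ (4 * b) ^ (j + 4) := pow_le_pow_left₀ (sq_nonneg c) hcb _
      _ = 4 ^ (j + 4) * (b ^ (j + 3) * b) := by ring
      _ ≤ 4 ^ (j + 4) * ((4 ^ (j + 3) * x n ^ 3) * x n ^ 3) := by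
          gcongr
          exact ih (by omega)
      _ ≤ 4 ^ (j + 4) * ((4 ^ (j + 4) * x n ^ 3) * x n ^ 3) := by
          gcongr
          · norm_num
          · omega
      _ = (4 ^ (j + 1 + 3) * x n ^ 3) ^ 2 := by ring

theorem abs_sum_neg_one_pow_mul_choose_le {x : ℕ → ℤ} {n : ℕ} (hx0 : 1 ≤ x 0)
    (hmono : MonotoneOn x (Set.Iic n)) (hsq : ∀ k < n, x k ^ 2 ≤ 4 * x (k + 1)) :
    |∑ j ∈ range (n + 1), (-1 : ℝ) ^ j * ((x (n - j)).toNat.choose (j + 3) : ℝ)| ≤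
      exp 4 * x n ^ 3 := by
  have hx : ∀ k ≤ n, ((x k).toNat : ℝ) = x k := fun k hk => by
    have := hx0.trans (hmono (Set.mem_Iic.2 (Nat.zero_le n)) (Set.mem_Iic.2 hk) (Nat.zero_le k))
    rw [← Int.cast_natCast, Int.toNat_of_nonneg (by omega)]
  have hpow := pow_le_four_pow_mul_pow_three hx0 hmono hsq
  have hxn : (0 : ℝ) ≤ x n ^ 3 := by
    rw [← hx n le_rfl]
    positivity
  calc |∑ j ∈ range (n + 1), (-1 : ℝ) ^ j * ((x (n - j)).toNat.choose (j + 3) : ℝ)|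
      ≤ ∑ j ∈ range (n + 1), ((x (n - j)).toNat.choose (j + 3) : ℝ) :=
        (abs_sum_le_sum_abs _ _).trans_eq (by simp)
    _ ≤ ∑ j ∈ range (n + 1), 4 ^ (3 + j) / (3 + j)! * (x n : ℝ) ^ 3 := by
        refine sum_le_sum fun j hj => ?_
        have hj : j ≤ n := Nat.lt_succ_iff.1 (mem_range.1 hj)
        calc ((x (n - j)).toNat.choose (j + 3) : ℝ)
            ≤ (x (n - j) : ℝ) ^ (j + 3) / (j + 3)! := by
              rw [← hx _ (Nat.sub_le n j)]
              exact Nat.choose_le_pow_div _ _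
          _ ≤ 4 ^ (j + 3) * x n ^ 3 / (j + 3)! := by
              gcongr
              exact_mod_cast hpow j hj
          _ = 4 ^ (3 + j) / (3 + j)! * (x n : ℝ) ^ 3 := by
              rw [add_comm j 3]; ring
    _ ≤ (∑ i ∈ range (3 + (n + 1)), (4 : ℝ) ^ i / i !) * x n ^ 3 := by
        rw [sum_range_add _ 3, add_mul, sum_mul (range (n + 1))]
        exact le_add_of_nonneg_left (mul_nonneg (by positivity) hxn)
    _ ≤ exp 4 * x n ^ 3 := by
        gcongr
        exact sum_le_exp_of_nonneg (by norm_num) _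

theorem abs_ell_add_two_sub_le (ℓ : ℕ → ℤ)
    (hrec : ∀ n : ℕ, ℓ (n + 1) =
      1 + ∑ j ∈ Finset.range (n + 1), (-1) ^ j * ((ℓ (n - j)).toNat.choose (j + 2) : ℤ))
    {n : ℕ} (h0 : 1 ≤ ℓ 0) (hmono : MonotoneOn ℓ (Set.Iic (n + 1)))
    (hsq : ∀ k < n, ℓ k ^ 2 ≤ 4 * ℓ (k + 1)) :
    |(ℓ (n + 2) : ℝ) - 1 - ℓ (n + 1) * (ℓ (n + 1) - 1) / 2| ≤ exp 4 * ℓ n ^ 3 := by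
  have hpos : 0 ≤ ℓ (n + 1) :=
    (zero_le_one.trans h0).trans (hmono (Set.mem_Iic.2 (Nat.zero_le _)) Set.self_mem_Iic
      (Nat.zero_le _))
  have hcast : ((ℓ (n + 1)).toNat : ℝ) = ℓ (n + 1) := by
    rw [← Int.cast_natCast, Int.toNat_of_nonneg hpos]
  have hsplit : (ℓ (n + 2) : ℝ) = 1 + ℓ (n + 1) * (ℓ (n + 1) - 1) / 2 -
      ∑ j ∈ range (n + 1), (-1 : ℝ) ^ j * ((ℓ (n - j)).toNat.choose (j + 3) : ℝ) := by
    rw [hrec, sum_range_succ', ← hcast, ← Nat.cast_choose_two]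
    push_cast
    simp only [pow_succ, mul_neg_one, neg_mul, sum_neg_distrib]
    ring
  rw [hsplit, show ∀ a b : ℝ, 1 + a - b - 1 - a = -b by intros; ring, abs_neg]
  exact abs_sum_neg_one_pow_mul_choose_le h0 (hmono.mono (Set.Iic_subset_Iic.2 n.le_succ)) hsq

-- `55 > e⁴`, and `7040 = 128 · 55` makes `A ^ 4 / 16 ≤ B ^ 2` beat the error; `ℓ 6` exceeds it.
theorem lt_and_sq_le_four_mul_of_abs_sub_le {A B C : ℝ} (hA : 7040 ≤ A) (hAB : A ≤ B)
    (hsq : A ^ 2 ≤ 4 * B) (hC : |C - 1 - B * (B - 1) / 2| ≤ 55 * A ^ 3) :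
    B < C ∧ B ^ 2 ≤ 4 * C := by
  have h16 : A ^ 4 ≤ 16 * B ^ 2 := by nlinarith
  have hA3 : 7040 * A ^ 3 ≤ A ^ 4 := by nlinarith [pow_pos (by linarith : 0 < A) 3]
  rw [abs_le] at hC
  constructor <;> nlinarith

theorem abs_div_sq_sub_half_le {A B C K : ℝ} (hA : 1 ≤ A) (hAB : A ≤ B) (hsq : A ^ 2 ≤ 4 * B)
    (hC : |C - 1 - B * (B - 1) / 2| ≤ K * A ^ 3) :
    |C / B ^ 2 - 1 / 2| ≤ (16 * K + 1) / A := by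
  have hB : 0 < B := by linarith
  have hK : 0 ≤ K := nonneg_of_mul_nonneg_left ((abs_nonneg _).trans hC) (by positivity)
  have hnum : |C - B ^ 2 / 2| ≤ K * A ^ 3 + B := by
    calc |C - B ^ 2 / 2| = |(C - 1 - B * (B - 1) / 2) + (1 - B / 2)| := by ring_nf
      _ ≤ |C - 1 - B * (B - 1) / 2| + |1 - B / 2| := abs_add_le _ _
      _ ≤ K * A ^ 3 + B := add_le_add hC (abs_le.2 ⟨by linarith, by linarith⟩)
  have h16 : A ^ 4 ≤ 16 * B ^ 2 := by nlinarith
  calc |C / B ^ 2 - 1 / 2| = |C - B ^ 2 / 2| / B ^ 2 := by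
        rw [← abs_of_pos (pow_pos hB 2), ← abs_div, abs_of_pos (pow_pos hB 2)]
        congr 1
        field_simp
    _ ≤ (K * A ^ 3 + B) / B ^ 2 := by gcongr
    _ ≤ (16 * K + 1) / A := by
        rw [div_le_div_iff₀ (by positivity) (by linarith)]
        nlinarith [mul_le_mul_of_nonneg_left h16 hK, mul_le_mul_of_nonneg_right hAB hB.le]

theorem exp_four_lt : exp 4 < 55 := by
  have h := pow_lt_pow_left₀ exp_one_lt_d9 (exp_pos 1).le (by norm_num : (4 : ℕ) ≠ 0)
  rw [exp_one_pow] at h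
  exact_mod_cast h.trans (by norm_num)

theorem ell_values (ℓ : ℕ → ℤ) (h0 : ℓ 0 = 3)
    (hrec : ∀ n : ℕ, ℓ (n + 1) =
      1 + ∑ j ∈ Finset.range (n + 1), (-1) ^ j * ((ℓ (n - j)).toNat.choose (j + 2) : ℤ)) :
    ℓ 1 = 4 ∧ ℓ 2 = 6 ∧ ℓ 3 = 12 ∧ ℓ 4 = 48 ∧ ℓ 5 = 924 ∧ ℓ 6 = 409620 ∧
      ℓ 7 = 83763206256 := by
  -- `Nat.choose` reduces by Pascal's rule, far too slowly for `decide`; `descFactorial` does not.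
  have hchoose := Nat.choose_eq_descFactorial_div_factorial
  have h1 : ℓ 1 = 4 := by
    rw [hrec]
    simp only [sum_range_succ, sum_range_zero, hchoose, h0]
    decide
  have h2 : ℓ 2 = 6 := by
    rw [hrec]
    simp only [sum_range_succ, sum_range_zero, hchoose, h0, h1]
    decide
  have h3 : ℓ 3 = 12 := by
    rw [hrec]
    simp only [sum_range_succ, sum_range_zero, hchoose, h0, h1, h2]
    decide
  have h4 : ℓ 4 = 48 := by
    rw [hrec]
    simp only [sum_range_succ, sum_range_zero, hchoose, h0, h1, h2, h3]
    decide
  have h5 : ℓ 5 = 924 := by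
    rw [hrec]
    simp only [sum_range_succ, sum_range_zero, hchoose, h0, h1, h2, h3, h4]
    decide
  have h6 : ℓ 6 = 409620 := by
    rw [hrec]
    simp only [sum_range_succ, sum_range_zero, hchoose, h0, h1, h2, h3, h4, h5]
    decide
  have h7 : ℓ 7 = 83763206256 := by
    rw [hrec]
    simp only [sum_range_succ, sum_range_zero, hchoose, h0, h1, h2, h3, h4, h5, h6]
    decide
  exact ⟨h1, h2, h3, h4, h5, h6, h7⟩

theorem ell_lt_succ_and_sq_le (ℓ : ℕ → ℤ) (h0 : ℓ 0 = 3)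
    (hrec : ∀ n : ℕ, ℓ (n + 1) =
      1 + ∑ j ∈ Finset.range (n + 1), (-1) ^ j * ((ℓ (n - j)).toNat.choose (j + 2) : ℤ))
    (m : ℕ) : ℓ m < ℓ (m + 1) ∧ ℓ m ^ 2 ≤ 4 * ℓ (m + 1) := by
  obtain ⟨h1, h2, h3, h4, h5, h6, h7⟩ := ell_values ℓ h0 hrec
  induction m using Nat.strong_induction_on with
  | _ m ih =>
  obtain hm | ⟨n, hn, rfl⟩ : m ≤ 6 ∨ ∃ n, 6 ≤ n ∧ m = n + 1 :=
    (le_or_gt m 6).imp_right fun hm => ⟨m - 1, by omega, by omega⟩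
  · interval_cases m <;> simp only [h0, h1, h2, h3, h4, h5, h6, h7] <;> norm_num
  have hmono : StrictMonoOn ℓ (Set.Iic (n + 1)) :=
    strictMonoOn_Iic_of_lt_succ fun k hk => (ih k hk).1
  have hA : (7040 : ℝ) ≤ ℓ n := by
    have := hmono.monotoneOn (Set.mem_Iic.2 (by omega)) (Set.mem_Iic.2 n.le_succ) hn
    rw [h6] at this
    exact_mod_cast this.trans' (by norm_num)
  have herr := abs_ell_add_two_sub_le ℓ hrec (by omega) hmono.monotoneOn
    fun k hk => (ih k (by omega)).2
  have hstep := lt_and_sq_le_four_mul_of_abs_sub_le hA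
    (by exact_mod_cast (ih n (by omega)).1.le) (by exact_mod_cast (ih n (by omega)).2)
    (herr.trans (mul_le_mul_of_nonneg_right exp_four_lt.le (pow_nonneg (by linarith) 3)))
  exact_mod_cast hstep

theorem ell_ratio_tendsto (ℓ : ℕ → ℤ) (h0 : ℓ 0 = 3)
    (hrec : ∀ n : ℕ, ℓ (n + 1) =
      1 + ∑ j ∈ Finset.range (n + 1), (-1) ^ j * ((ℓ (n - j)).toNat.choose (j + 2) : ℤ)) :
    Tendsto (fun n : ℕ => (ℓ (n + 1) : ℝ) / (ℓ n : ℝ) ^ 2) atTop (nhds (1 / 2)) := by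
  have hinv := ell_lt_succ_and_sq_le ℓ h0 hrec
  have hmono : StrictMono ℓ := strictMono_nat_of_lt_succ fun n => (hinv n).1
  have hge : ∀ n, 3 ≤ ℓ n := fun n => h0 ▸ hmono.monotone (Nat.zero_le n)
  have hbound : ∀ n : ℕ,
      |(ℓ (n + 2) : ℝ) / (ℓ (n + 1) : ℝ) ^ 2 - 1 / 2| ≤ (16 * exp 4 + 1) / ℓ n := fun n =>
    abs_div_sq_sub_half_le (by exact_mod_cast (hge n).trans' (by norm_num))
      (by exact_mod_cast (hinv n).1.le) (by exact_mod_cast (hinv n).2)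
      (abs_ell_add_two_sub_le ℓ hrec (by omega) (hmono.monotone.monotoneOn _)
        fun k _ => (hinv k).2)
  have hlim : Tendsto (fun n => (ℓ n : ℝ)) atTop atTop :=
    tendsto_intCast_atTop_atTop.comp <| tendsto_atTop_atTop_of_monotone' hmono.monotone
      hmono.not_bddAbove_range_of_isSuccArchimedean
  rw [← tendsto_add_atTop_iff_nat 1, tendsto_iff_norm_sub_tendsto_zero]
  exact squeeze_zero (fun _ => norm_nonneg _) hbound (tendsto_const_nhds.div_atTop hlim)
end

section
/- Define ℓ_n recursively by ℓ_0 = 3 and ℓ_{n+1} = 1 + Σ_{j=0}^{n} (-1)^j * binom(ℓ_{n-j}, j+2). Then for all n ≥ 0, ℓ_n = 3 + Σ_{j=0}^{n-1} (-1)^j * binom(ℓ_{n-j-1} - 1, j+2). -/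
/-!
Write `a m = ℓ m - 1` and `S g n k = ∑_{j<n} (-1)^j C(g (n-1-j), j+k)` (`altChooseSum`).
Pascal's rule `C(a+1, j+2) = C(a, j+2) + C(a, j+1)` splits the recursion into
`S a (n+1) 2 + S a (n+1) 1`, and `S a (n+1) 1 = a n - S a n 2 = 2` by induction, which gives the
formula, provided every `ℓ m ≥ 1` so that `toNat` does not truncate.

Positivity is the real content. `S g (n+1) k = C(g n, k) - S g n (k+1)` is an alternating sum with
decreasing terms as soon as `C(a m, k+1) ≤ C(a (m+1), k)` for `k ≥ 2`, which holds when
`a m * C(a m, 2) ≤ C(a (m+1), 2)`. Conversely these bounds give `3 a (n+1) ≥ 2 C(a n, 2) + 6`,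
which reproduces that growth once `a n ≥ 10`; the values `a = 2, 3, 5, 11` start the induction.
-/

open Finset

namespace Nat

theorem three_mul_choose_three_le (b : ℕ) : 3 * b.choose 3 ≤ b * b.choose 2 := by
  have h := choose_succ_right_eq b 2
  calc 3 * b.choose 3 = b.choose 2 * (b - 2) := by rw [← h]; ring
    _ ≤ b * b.choose 2 := by rw [mul_comm b]; exact Nat.mul_le_mul_left _ (Nat.sub_le b 2)

theorem choose_succ_le_choose_of_mul_choose_two_le {a b k : ℕ} (hk : 2 ≤ k) (hba : b ≤ a)
    (h : b * b.choose 2 ≤ a.choose 2) : b.choose (k + 1) ≤ a.choose k := by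
  rcases lt_or_ge b k with hbk | hkb
  · simp [choose_eq_zero_of_lt (by omega : b < k + 1)]
  have hpos : 0 < (k + 1) * k.choose 2 * a.choose 2 :=
    Nat.mul_pos (Nat.mul_pos k.succ_pos (choose_pos hk)) (choose_pos (by omega))
  have hmono : (b - 2).choose (k - 2) ≤ (a - 2).choose (k - 2) := choose_le_choose _ (by omega)
  refine Nat.le_of_mul_le_mul_right ?_ hpos
  calc b.choose (k + 1) * ((k + 1) * k.choose 2 * a.choose 2)
      = b.choose (k + 1) * (k + 1) * k.choose 2 * a.choose 2 := by ring
    _ = b.choose k * k.choose 2 * (b - k) * a.choose 2 := by rw [choose_succ_right_eq]; ring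
    _ = b.choose 2 * (b - 2).choose (k - 2) * (b - k) * a.choose 2 := by rw [choose_mul hk]
    _ ≤ b.choose 2 * (b - 2).choose (k - 2) * b * a.choose 2 := by gcongr; omega
    _ = (b * b.choose 2) * (b - 2).choose (k - 2) * a.choose 2 := by ring
    _ ≤ a.choose 2 * (a - 2).choose (k - 2) * a.choose 2 := by gcongr
    _ = a.choose k * k.choose 2 * a.choose 2 := by rw [choose_mul hk]
    _ ≤ a.choose k * ((k + 1) * k.choose 2 * a.choose 2) := by
        rw [mul_assoc]; gcongr; exact Nat.le_mul_of_pos_left _ k.succ_pos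

theorem le_and_mul_choose_two_le {x y : ℕ} (hx : 10 ≤ x) (hy : 2 * x.choose 2 + 6 ≤ 3 * y) :
    x ≤ y ∧ x * x.choose 2 ≤ y.choose 2 := by
  have hyq : (x : ℚ) * (x - 1) + 6 ≤ 3 * y := by
    have := (Nat.cast_le (α := ℚ)).2 hy
    push_cast [cast_choose_two] at this
    linarith
  have hxq : (10 : ℚ) ≤ x := by exact_mod_cast hx
  refine ⟨by exact_mod_cast (show (x : ℚ) ≤ y by nlinarith), ?_⟩
  have hq : (x : ℚ) * (x * (x - 1) / 2) ≤ y * (y - 1) / 2 := by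
    have hc : 0 ≤ (x : ℚ) * (x - 1) := by nlinarith
    have hsq : ((x : ℚ) * (x - 1) + 6) * (x * (x - 1) + 3) ≤ 3 * y * (3 * y - 3) :=
      mul_le_mul hyq (by linarith) (by linarith) (by linarith)
    nlinarith [mul_nonneg hc (by linarith : (0 : ℚ) ≤ x - 10)]
  have : ((x * x.choose 2 : ℕ) : ℚ) ≤ ((y.choose 2 : ℕ) : ℚ) := by
    push_cast [cast_choose_two]; exact hq
  exact_mod_cast this

end Nat

def altChooseSum (g : ℕ → ℕ) (n k : ℕ) : ℤ :=
  ∑ j ∈ range n, (-1) ^ j * ((g (n - j - 1)).choose (j + k) : ℤ)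

namespace altChooseSum

variable (g : ℕ → ℕ)

@[simp]
theorem zero (k : ℕ) : altChooseSum g 0 k = 0 := rfl

theorem succ (n k : ℕ) :
    altChooseSum g (n + 1) k = (g n).choose k - altChooseSum g n (k + 1) := by
  rw [altChooseSum, sum_range_succ', altChooseSum, sub_eq_neg_add, ← sum_neg_distrib]
  congr 1
  · refine sum_congr rfl fun j _ => ?_
    rw [show n + 1 - (j + 1) - 1 = n - j - 1 by omega, add_right_comm, add_assoc, pow_succ]
    ring
  · simp

theorem add_one_of_eq_add_one {g' : ℕ → ℕ} {n : ℕ} (h : ∀ m < n, g' m = g m + 1) (k : ℕ) :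
    altChooseSum g' n (k + 1) = altChooseSum g n (k + 1) + altChooseSum g n k := by
  rw [altChooseSum, altChooseSum, altChooseSum, ← sum_add_distrib]
  refine sum_congr rfl fun j hj => ?_
  rw [h _ (by simp at hj; omega), ← add_assoc, Nat.choose_succ_succ', Nat.cast_add]
  ring

theorem nonneg_and_le_choose {n k : ℕ}
    (hg : ∀ m < n, ∀ k, 2 ≤ k → (g m).choose (k + 1) ≤ (g (m + 1)).choose k) (hk : 2 ≤ k) :
    0 ≤ altChooseSum g (n + 1) k ∧ altChooseSum g (n + 1) k ≤ (g n).choose k := by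
  induction n generalizing k with
  | zero => simp [succ]
  | succ n ih =>
    obtain ⟨hnonneg, hle⟩ := ih (fun m hm => hg m (by omega)) (by omega : 2 ≤ k + 1)
    have hdom : ((g n).choose (k + 1) : ℤ) ≤ (g (n + 1)).choose k := by
      exact_mod_cast hg n (by omega) k hk
    rw [succ]
    constructor <;> linarith

end altChooseSum

def EllRecursion (ℓ : ℕ → ℤ) : Prop :=
  ∀ n : ℕ, ℓ (n + 1) =
    1 + ∑ j ∈ range (n + 1), (-1) ^ j * ((ℓ (n - j)).toNat.choose (j + 2) : ℤ)

def ellPred (ℓ : ℕ → ℤ) (m : ℕ) : ℕ := (ℓ m - 1).toNat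

def GrowthInvariant (ℓ : ℕ → ℤ) (N : ℕ) : Prop :=
  (∀ m ≤ N, 1 ≤ ℓ m) ∧
    (∀ m < N, ellPred ℓ m ≤ ellPred ℓ (m + 1) ∧
      ellPred ℓ m * (ellPred ℓ m).choose 2 ≤ (ellPred ℓ (m + 1)).choose 2) ∧
    10 ≤ ellPred ℓ N

namespace EllRecursion

variable {ℓ : ℕ → ℤ}

theorem eq_three_add_altChooseSum (h0 : ℓ 0 = 3) (hrec : EllRecursion ℓ) {n : ℕ}
    (hpos : ∀ m < n, 1 ≤ ℓ m) : ℓ n = 3 + altChooseSum (ellPred ℓ) n 2 := by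
  induction n with
  | zero => simp [h0]
  | succ n ih =>
    have htoNat : ∀ m < n + 1, (ℓ m).toNat = ellPred ℓ m + 1 := fun m hm => by
      have := hpos m hm; unfold ellPred; omega
    have hpred : (ellPred ℓ n : ℤ) = ℓ n - 1 := by
      have := hpos n n.lt_succ_self; unfold ellPred; omega
    calc ℓ (n + 1) = 1 + altChooseSum (fun m => (ℓ m).toNat) (n + 1) (1 + 1) := by
          rw [hrec n, altChooseSum]
          congr 1
          exact sum_congr rfl fun j _ => by rw [Nat.sub_right_comm, Nat.add_sub_cancel]
      _ = 1 + altChooseSum (ellPred ℓ) (n + 1) 2 + altChooseSum (ellPred ℓ) (n + 1) 1 := by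
          rw [altChooseSum.add_one_of_eq_add_one _ htoNat]; ring
      _ = 3 + altChooseSum (ellPred ℓ) (n + 1) 2 := by
          rw [altChooseSum.succ _ n 1, Nat.choose_one_right, hpred,
            ih fun m hm => hpos m (by omega)]
          ring

theorem first_values (h0 : ℓ 0 = 3) (hrec : EllRecursion ℓ) :
    ℓ 1 = 4 ∧ ℓ 2 = 6 ∧ ℓ 3 = 12 := by
  have h1 : ℓ 1 = 4 := by simpa [h0] using hrec 0
  have h2 : ℓ 2 = 6 := by simpa [sum_range_succ, h0, h1, Nat.choose_two_right] using hrec 1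
  have h3 : ℓ 3 = 12 := by simpa [sum_range_succ, h0, h1, h2, Nat.choose_two_right] using hrec 2
  exact ⟨h1, h2, h3⟩

theorem growthInvariant_three (h0 : ℓ 0 = 3) (hrec : EllRecursion ℓ) : GrowthInvariant ℓ 3 := by
  obtain ⟨h1, h2, h3⟩ := first_values h0 hrec
  refine ⟨fun m hm => ?_, fun m hm => ?_, ?_⟩
  · interval_cases m <;> simp [h0, h1, h2, h3]
  · interval_cases m <;> simp [ellPred, h0, h1, h2, h3, Nat.choose_two_right]
  · simp [ellPred, h3]

theorem growthInvariant_succ (h0 : ℓ 0 = 3) (hrec : EllRecursion ℓ) {n : ℕ} (hn : 3 ≤ n)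
    (hinv : GrowthInvariant ℓ n) : GrowthInvariant ℓ (n + 1) := by
  obtain ⟨hpos, hgrowth, hten⟩ := hinv
  set a := ellPred ℓ
  obtain ⟨p, rfl⟩ : ∃ p, n = p + 1 := ⟨n - 1, by omega⟩
  have hdom : ∀ m < p + 1, ∀ k, 2 ≤ k → (a m).choose (k + 1) ≤ (a (m + 1)).choose k :=
    fun m hm k hk => Nat.choose_succ_le_choose_of_mul_choose_two_le hk (hgrowth m hm).1
      (hgrowth m hm).2
  have hformula := eq_three_add_altChooseSum h0 hrec (n := p + 2) fun m hm => hpos m (by omega)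
  have hsum_nonneg := (altChooseSum.nonneg_and_le_choose a hdom le_rfl).1
  have hsum_le := (altChooseSum.nonneg_and_le_choose a (n := p)
    (fun m hm => hdom m (by omega)) (by norm_num : 2 ≤ 3)).2
  have hpos' : 1 ≤ ℓ (p + 2) := by linarith
  have hy : (a (p + 2) : ℤ) = ℓ (p + 2) - 1 := by simp only [a, ellPred]; omega
  have hchoose : 3 * (a p).choose 3 ≤ (a (p + 1)).choose 2 :=
    (Nat.three_mul_choose_three_le _).trans (hgrowth p (by omega)).2
  have hkey : 2 * (a (p + 1)).choose 2 + 6 ≤ 3 * a (p + 2) := by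
    rw [altChooseSum.succ] at hformula
    zify at hchoose ⊢
    linarith
  have hxy := Nat.le_and_mul_choose_two_le hten hkey
  refine ⟨fun m hm => ?_, fun m hm => ?_, hten.trans hxy.1⟩
  · rcases Nat.lt_or_ge m (p + 2) with h | h
    · exact hpos m (by omega)
    · rwa [show m = p + 2 by omega]
  · rcases Nat.lt_or_ge m (p + 1) with h | h
    · exact hgrowth m h
    · rwa [show m = p + 1 by omega]

theorem one_le (h0 : ℓ 0 = 3) (hrec : EllRecursion ℓ) (n : ℕ) : 1 ≤ ℓ n := by
  have hinv : GrowthInvariant ℓ (max n 3) := by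
    induction max n 3, le_max_right n 3 using Nat.le_induction with
    | base => exact growthInvariant_three h0 hrec
    | succ N hN ih => exact growthInvariant_succ h0 hrec hN ih
  exact hinv.1 n (le_max_left _ _)

end EllRecursion

theorem ell_alt_recursion' (ℓ : ℕ → ℤ) (h0 : ℓ 0 = 3)
    (hrec : ∀ n : ℕ, ℓ (n + 1) =
      1 + ∑ j ∈ Finset.range (n + 1), (-1) ^ j * ((ℓ (n - j)).toNat.choose (j + 2) : ℤ)) (n : ℕ) :
    ℓ n = 3 + ∑ j ∈ Finset.range n,
      (-1) ^ j * (((ℓ (n - j - 1) - 1).toNat.choose (j + 2) : ℤ)) :=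
  EllRecursion.eq_three_add_altChooseSum h0 hrec fun m _ => EllRecursion.one_le h0 hrec m
end

section
/- Define ℓ_n by ℓ_0 = 3 and ℓ_{n+1} = 1 + Σ_{j=0}^{n} (-1)^j * binom(ℓ_{n-j}, j+2). Then ℓ_n is asymptotic to 2 · 2^(ρ·2^n) as n → ∞, for some real constant ρ > 0; that is, ℓ_n / (2 · 2^(ρ·2^n)) → 1. -/
/-!
Once consecutive terms satisfy `C(ℓ (m-1), k+1) ≤ C(ℓ m, k)` for all `k ≥ 2`, the summands
`C(ℓ (n-j), j+2)` of the recurrence decrease in `j`, so the alternating sum lies between its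
first term and its first term minus its second. Hence `ℓ (n+1) - 1` is `C(ℓ n, 2)` up to an error
of at most `C(ℓ (n-1), 3) ≤ ℓ (n-1) ^ 3 / 6`, which gives
`ℓ n ^ 2 / 2 * (1 - 6 / ℓ (n-1)) ≤ ℓ (n+1) ≤ ℓ n ^ 2 / 2`. From `n = 4` on this forces
`ℓ n ^ 3 ≤ ℓ (n+1) ^ 2`, which is enough for the binomial comparison of the next pair, so both
propagate by induction. For `z n = log₂ ℓ n - 1` the two bounds read
`2 z n - O(1 / ℓ (n-1)) ≤ z (n+1) ≤ 2 z n`, so `z n / 2 ^ n` decreases to some `ρ` with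
`0 ≤ z n - ρ 2 ^ n = O(1 / ℓ (n-1)) → 0`.
-/

open Filter Topology Finset

theorem alternating_sum_range_succ {R : Type*} [Ring R] (f : ℕ → R) (n : ℕ) :
    ∑ i ∈ range (n + 1), (-1) ^ i * f i = f 0 - ∑ i ∈ range n, (-1) ^ i * f (i + 1) := by
  simp [sum_range_succ', pow_succ, sub_eq_neg_add]

theorem Antitone.alternating_sum_range_mem_Icc {R : Type*} [Ring R] [PartialOrder R]
    [IsOrderedRing R] {f : ℕ → R} (hf : Antitone f) (hf0 : ∀ i, 0 ≤ f i) (n : ℕ) :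
    ∑ i ∈ range (n + 1), (-1) ^ i * f i ∈ Set.Icc (f 0 - f 1) (f 0) := by
  induction n generalizing f with
  | zero => simpa using hf0 1
  | succ n ih =>
    obtain ⟨hlow, hup⟩ :=
      ih (f := fun i => f (i + 1)) (fun _ _ h => hf (by omega)) fun i => hf0 _
    simp only [zero_add, Nat.reduceAdd] at hlow hup
    rw [alternating_sum_range_succ]
    exact ⟨sub_le_sub_left hup _, sub_le_self _ ((sub_nonneg.2 (hf (by norm_num))).trans hlow)⟩

-- With `b = ℓ (m - 1)` and `a = ℓ m`, this says that the summand `C(ℓ (m - 1), k + 1)` of the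
-- recurrence is at most the preceding one, `C(ℓ m, k)`.
def ChooseShiftLE (b a : ℕ) : Prop :=
  ∀ k, 2 ≤ k → b.choose (k + 1) ≤ a.choose k

theorem chooseShiftLE_of_forall_lt {b a : ℕ}
    (h : ∀ k < b, 2 ≤ k → b.choose (k + 1) ≤ a.choose k) : ChooseShiftLE b a := by
  intro k hk
  rcases lt_or_ge k b with hkb | hkb
  · exact h k hkb hk
  · simp [Nat.choose_eq_zero_of_lt (Nat.lt_succ_of_le hkb)]

theorem descFactorial_mul_pow_le {b a : ℕ} (hb : b ≤ a) (k : ℕ) :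
    b.descFactorial k * a ^ k ≤ a.descFactorial k * b ^ k := by
  induction k with
  | zero => simp
  | succ k ih =>
    have hstep : (b - k) * a ≤ (a - k) * b := by
      rw [Nat.sub_mul, Nat.sub_mul, mul_comm b a]
      exact Nat.sub_le_sub_left (Nat.mul_le_mul_left k hb) _
    calc b.descFactorial (k + 1) * a ^ (k + 1)
        = ((b - k) * a) * (b.descFactorial k * a ^ k) := by
          rw [Nat.descFactorial_succ, pow_succ]; ring
      _ ≤ ((a - k) * b) * (a.descFactorial k * b ^ k) := Nat.mul_le_mul hstep ih
      _ = a.descFactorial (k + 1) * b ^ (k + 1) := by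
          rw [Nat.descFactorial_succ, pow_succ]; ring

theorem choose_mul_pow_le {b a : ℕ} (hb : b ≤ a) (k : ℕ) :
    b.choose k * a ^ k ≤ a.choose k * b ^ k := by
  have h := descFactorial_mul_pow_le hb k
  rw [Nat.descFactorial_eq_factorial_mul_choose, Nat.descFactorial_eq_factorial_mul_choose,
    mul_assoc, mul_assoc] at h
  exact Nat.le_of_mul_le_mul_left h k.factorial_pos

theorem chooseShiftLE_of_pow_three_le_sq {b a : ℕ} (hb : b ≤ a) (h : b ^ 3 ≤ a ^ 2) :
    ChooseShiftLE b a := by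
  intro k hk
  rcases Nat.eq_zero_or_pos a with rfl | ha
  · simp [Nat.le_zero.1 hb]
  have hpow : b ^ (k + 1) ≤ a ^ k := by
    obtain ⟨j, rfl⟩ := Nat.exists_eq_add_of_le hk
    calc b ^ (2 + j + 1) = b ^ 3 * b ^ j := by ring
      _ ≤ a ^ 2 * a ^ j := Nat.mul_le_mul h (Nat.pow_le_pow_left hb j)
      _ = a ^ (2 + j) := by ring
  refine Nat.le_of_mul_le_mul_right ?_ (pow_pos ha k)
  calc b.choose (k + 1) * a ^ k
      ≤ b.choose (k + 1) * (k + 1) * a ^ k := by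
        gcongr; exact Nat.le_mul_of_pos_right _ k.succ_pos
    _ = b.choose k * a ^ k * (b - k) := by rw [Nat.choose_succ_right_eq]; ring
    _ ≤ a.choose k * b ^ k * b := Nat.mul_le_mul (choose_mul_pow_le hb k) (Nat.sub_le b k)
    _ = a.choose k * b ^ (k + 1) := by ring
    _ ≤ a.choose k * a ^ k := Nat.mul_le_mul_left _ hpow

theorem neg_four_mul_le_logb_two_one_sub {δ : ℝ} (h0 : 0 ≤ δ) (h1 : δ ≤ 1 / 2) :
    -(4 * δ) ≤ Real.logb 2 (1 - δ) := by
  have hpos : 0 < 1 - δ := by linarith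
  have hinv : (1 - δ)⁻¹ ≤ 1 + 2 * δ := by
    rw [inv_le_iff_one_le_mul₀ hpos]
    nlinarith
  have hlog : -(2 * δ) ≤ Real.log (1 - δ) := by
    linarith [Real.one_sub_inv_le_log_of_pos hpos]
  have hlog2 : 1 / 2 < Real.log 2 := by linarith [Real.log_two_gt_d9]
  rw [Real.logb, le_div_iff₀ (by linarith)]
  nlinarith

theorem div_two_pow_mem_Icc_of_doubling {z e : ℕ → ℝ} (he : Antitone e)
    (he_nonneg : ∀ n, 0 ≤ e n) (hup : ∀ n, z (n + 1) ≤ 2 * z n)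
    (hlow : ∀ n, 2 * z n - e n ≤ z (n + 1)) (k n : ℕ) :
    z (n + k) / 2 ^ k ∈ Set.Icc (z n - e n) (z n) := by
  induction k generalizing n with
  | zero => simp [he_nonneg]
  | succ k ih =>
    obtain ⟨hlow', hup'⟩ := ih (n + 1)
    rw [show n + (k + 1) = n + 1 + k by ring, pow_succ, ← div_div]
    constructor <;> linarith [hup n, hlow n, he (Nat.le_succ n)]

theorem exists_tendsto_sub_mul_two_pow {z e : ℕ → ℝ} (he : Antitone e)
    (he0 : Tendsto e atTop (𝓝 0)) (hup : ∀ n, z (n + 1) ≤ 2 * z n)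
    (hlow : ∀ n, 2 * z n - e n ≤ z (n + 1)) :
    ∃ ρ, z 0 - e 0 ≤ ρ ∧ Tendsto (fun n => z n - ρ * 2 ^ n) atTop (𝓝 0) := by
  have he_nonneg : ∀ n, 0 ≤ e n := he.le_of_tendsto he0
  set y : ℕ → ℝ := fun n => z n / 2 ^ n with hy
  have hy_iter : ∀ n k, y (n + k) ∈ Set.Icc (y n - e n / 2 ^ n) (y n) := by
    intro n k
    obtain ⟨h1, h2⟩ := div_two_pow_mem_Icc_of_doubling he he_nonneg hup hlow k n
    have h2n : (0 : ℝ) < 2 ^ n := by positivity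
    have hyk : y (n + k) = z (n + k) / 2 ^ k / 2 ^ n := by
      simp only [hy, pow_add, mul_comm, div_div]
    rw [hyk, hy, ← sub_div]
    exact ⟨div_le_div_of_nonneg_right h1 h2n.le, div_le_div_of_nonneg_right h2 h2n.le⟩
  have hbdd : BddBelow (Set.range y) := by
    refine ⟨y 0 - e 0 / 2 ^ 0, ?_⟩
    rintro _ ⟨k, rfl⟩
    simpa using (hy_iter 0 k).1
  set ρ := ⨅ n, y n
  have hle_ρ : ∀ n, y n - e n / 2 ^ n ≤ ρ := by
    intro n
    refine le_ciInf fun m => ?_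
    rcases le_total n m with h | h
    · obtain ⟨k, rfl⟩ := Nat.exists_eq_add_of_le h
      exact (hy_iter n k).1
    · obtain ⟨k, rfl⟩ := Nat.exists_eq_add_of_le h
      have : 0 ≤ e (m + k) / 2 ^ (m + k) := div_nonneg (he_nonneg _) (by positivity)
      linarith [(hy_iter m k).2]
  have hgap : ∀ n, z n - ρ * 2 ^ n ∈ Set.Icc 0 (e n) := by
    intro n
    have h2n : (0 : ℝ) < 2 ^ n := by positivity
    have h1 := ciInf_le hbdd n
    have h2 := hle_ρ n
    rw [hy, le_div_iff₀ h2n] at h1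
    rw [hy, ← sub_div, div_le_iff₀ h2n] at h2
    constructor <;> linarith
  refine ⟨ρ, by simpa [hy] using hle_ρ 0, ?_⟩
  exact tendsto_of_tendsto_of_tendsto_of_le_of_le tendsto_const_nhds he0
    (fun n => (hgap n).1) fun n => (hgap n).2

theorem logb_two_sq_div_two {x : ℝ} (hx : 0 < x) :
    Real.logb 2 (x ^ 2 / 2) = 2 * Real.logb 2 x - 1 := by
  rw [Real.logb_div (by positivity) two_ne_zero, Real.logb_pow, Real.logb_self_eq_one one_lt_two]
  push_cast
  ring

theorem exists_tendsto_div_two_mul_two_rpow {x δ : ℕ → ℝ} (hx : ∀ n, 0 < x n)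
    (hδ : Antitone δ) (hδ0 : Tendsto δ atTop (𝓝 0)) (hδ_le : ∀ n, δ n ≤ 1 / 2)
    (hup : ∀ n, x (n + 1) ≤ x n ^ 2 / 2) (hlow : ∀ n, x n ^ 2 / 2 * (1 - δ n) ≤ x (n + 1)) :
    ∃ ρ, Real.logb 2 (x 0) - 1 - 4 * δ 0 ≤ ρ ∧
      Tendsto (fun n => x n / (2 * (2 : ℝ) ^ (ρ * 2 ^ n))) atTop (𝓝 1) := by
  have hδ_nonneg : ∀ n, 0 ≤ δ n := hδ.le_of_tendsto hδ0
  set z : ℕ → ℝ := fun n => Real.logb 2 (x n) - 1 with hz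
  have hz_up : ∀ n, z (n + 1) ≤ 2 * z n := by
    intro n
    have := Real.logb_le_logb_of_le one_lt_two (hx (n + 1)) (hup n)
    rw [logb_two_sq_div_two (hx n)] at this
    simp only [hz]
    linarith
  have hz_low : ∀ n, 2 * z n - 4 * δ n ≤ z (n + 1) := by
    intro n
    have hpos : 0 < 1 - δ n := by linarith [hδ_le n]
    have := Real.logb_le_logb_of_le one_lt_two (by have := hx n; positivity) (hlow n)
    rw [Real.logb_mul (by have := hx n; positivity) hpos.ne', logb_two_sq_div_two (hx n)] at this
    simp only [hz]
    linarith [neg_four_mul_le_logb_two_one_sub (hδ_nonneg n) (hδ_le n)]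
  obtain ⟨ρ, hρ, hlim⟩ := exists_tendsto_sub_mul_two_pow
    (hδ.const_mul (by norm_num : (0 : ℝ) ≤ 4)) (by simpa using hδ0.const_mul 4) hz_up hz_low
  refine ⟨ρ, hρ, ?_⟩
  have h2lim := (tendsto_const_nhds (x := (2 : ℝ))).rpow hlim (Or.inl two_ne_zero)
  rw [Real.rpow_zero] at h2lim
  refine h2lim.congr fun n => ?_
  simp only [hz]
  rw [Real.rpow_sub two_pos, Real.rpow_sub two_pos, Real.rpow_logb two_pos (by norm_num) (hx n),
    Real.rpow_one, div_div]

def EllRecurrence (ℓ : ℕ → ℤ) : Prop :=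
  ∀ n : ℕ, ℓ (n + 1) =
    1 + ∑ j ∈ range (n + 1), (-1) ^ j * ((ℓ (n - j)).toNat.choose (j + 2) : ℤ)

section
variable {ℓ : ℕ → ℤ}

theorem ell_values_s13 (h0 : ℓ 0 = 3) (hrec : EllRecurrence ℓ) :
    ℓ 1 = 4 ∧ ℓ 2 = 6 ∧ ℓ 3 = 12 ∧ ℓ 4 = 48 := by
  have h1 : ℓ 1 = 4 := by rw [hrec 0]; norm_num [h0]; decide
  have h2 : ℓ 2 = 6 := by rw [hrec 1]; norm_num [sum_range_succ, h0, h1]; decide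
  have h3 : ℓ 3 = 12 := by rw [hrec 2]; norm_num [sum_range_succ, h0, h1, h2]; decide
  have h4 : ℓ 4 = 48 := by rw [hrec 3]; norm_num [sum_range_succ, h0, h1, h2, h3]; decide
  exact ⟨h1, h2, h3, h4⟩

theorem cast_toNat_choose_two {z : ℤ} (hz : 0 ≤ z) :
    ((z.toNat.choose 2 : ℕ) : ℝ) = z * (z - 1) / 2 := by
  have hcast : ((z.toNat : ℕ) : ℝ) = z := by exact_mod_cast Int.toNat_of_nonneg hz
  rw [Nat.cast_choose_two, hcast]

theorem cast_toNat_choose_three_le {z : ℤ} (hz : 0 ≤ z) :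
    ((z.toNat.choose 3 : ℕ) : ℝ) ≤ z ^ 3 / 6 := by
  have hcast : ((z.toNat : ℕ) : ℝ) = z := by exact_mod_cast Int.toNat_of_nonneg hz
  simpa [hcast, Nat.factorial] using Nat.choose_le_pow_div (α := ℝ) 3 z.toNat

-- At `m = 0` the hypothesis is `ChooseShiftLE (ℓ 0).toNat (ℓ 0).toNat`, as `0 - 1 = 0` in `ℕ`.
theorem ell_succ_bounds_s13 (hrec : EllRecurrence ℓ) {n : ℕ}
    (hkey : ∀ m ≤ n, ChooseShiftLE (ℓ (m - 1)).toNat (ℓ m).toNat)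
    (hn : 0 ≤ ℓ n) (hn' : 0 ≤ ℓ (n - 1)) :
    (ℓ n : ℝ) * (ℓ n - 1) / 2 + 1 - (ℓ (n - 1) : ℝ) ^ 3 / 6 ≤ ℓ (n + 1) ∧
      (ℓ (n + 1) : ℝ) ≤ ℓ n * (ℓ n - 1) / 2 + 1 := by
  set f : ℕ → ℤ := fun j => ((ℓ (n - j)).toNat.choose (j + 2) : ℤ) with hf
  have hanti : Antitone f := by
    refine antitone_nat_of_succ_le fun j => ?_
    have := hkey (n - j) (Nat.sub_le n j) (j + 2) (by omega)
    simp only [hf]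
    exact_mod_cast this
  obtain ⟨hlow, hup⟩ := hanti.alternating_sum_range_mem_Icc (fun j => Int.natCast_nonneg _) n
  have hsum : (ℓ (n + 1) : ℝ) = 1 + ((∑ i ∈ range (n + 1), (-1) ^ i * f i : ℤ) : ℝ) := by
    exact_mod_cast hrec n
  have hlow' := (Int.cast_le (R := ℝ)).2 hlow
  have hup' := (Int.cast_le (R := ℝ)).2 hup
  simp only [hf, Nat.sub_zero, Int.cast_sub, Int.cast_natCast] at hlow' hup'
  constructor <;> linarith [cast_toNat_choose_two hn, cast_toNat_choose_three_le hn']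

theorem chooseShiftLE_toNat_of_sq_le {b a : ℤ} (hb : 16 ≤ b) (h : b ^ 2 ≤ 4 * a) :
    ChooseShiftLE b.toNat a.toNat := by
  lift b to ℕ using by omega
  lift a to ℕ using by nlinarith
  simp only [Int.toNat_natCast]
  norm_cast at hb h
  exact chooseShiftLE_of_pow_three_le_sq (by nlinarith) (by nlinarith [Nat.mul_le_mul h h])

theorem sq_mul_sub_six_le_two_mul_mul {a b c : ℝ} (hc : 12 ≤ c) (hcb : c ^ 2 ≤ 4 * b)
    (ha : b * (b - 1) / 2 + 1 - c ^ 3 / 6 ≤ a) : b ^ 2 * (c - 6) ≤ 2 * a * c := by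
  have hb : 3 * c ≤ b := by nlinarith
  have hc3 : c ^ 3 ≤ 4 * b * c := by nlinarith
  nlinarith

theorem ell_bounds_and_chooseShiftLE (h0 : ℓ 0 = 3) (hrec : EllRecurrence ℓ) (n : ℕ) :
    (12 : ℝ) ≤ ℓ (n + 3) ∧ (ℓ (n + 3) : ℝ) ^ 2 ≤ 4 * ℓ (n + 4) ∧
      ∀ m ≤ n + 4, ChooseShiftLE (ℓ (m - 1)).toNat (ℓ m).toNat := by
  obtain ⟨h1, h2, h3, h4⟩ := ell_values_s13 h0 hrec
  induction n with
  | zero =>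
    refine ⟨by norm_num [h3], by norm_num [h3, h4], fun m hm => ?_⟩
    interval_cases m <;> simp only [h0, h1, h2, h3, h4]
    · exact chooseShiftLE_of_forall_lt (by decide)
    · exact chooseShiftLE_of_forall_lt (by decide)
    · exact chooseShiftLE_of_forall_lt (by decide)
    · exact chooseShiftLE_of_forall_lt (by decide)
    · exact chooseShiftLE_of_pow_three_le_sq (by decide) (by decide)
  | succ n ih =>
    obtain ⟨hc, hcb, hkey⟩ := ih
    have hb : (16 : ℝ) ≤ ℓ (n + 4) := by nlinarith
    obtain ⟨hlow, -⟩ := ell_succ_bounds_s13 hrec hkey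
      (by exact_mod_cast (by linarith : (0 : ℝ) ≤ ℓ (n + 4)))
      (by exact_mod_cast (by linarith : (0 : ℝ) ≤ ℓ (n + 3)))
    have hmain := sq_mul_sub_six_le_two_mul_mul hc hcb hlow
    have hba : (ℓ (n + 4) : ℝ) ^ 2 ≤ 4 * ℓ (n + 5) := by nlinarith
    refine ⟨by linarith, hba, fun m hm => ?_⟩
    rcases Nat.lt_or_ge m (n + 5) with hm' | hm'
    · exact hkey m (by omega)
    obtain rfl : m = n + 5 := by omega
    exact chooseShiftLE_toNat_of_sq_le (by exact_mod_cast hb) (by exact_mod_cast hba)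

theorem chooseShiftLE_ell (h0 : ℓ 0 = 3) (hrec : EllRecurrence ℓ) (m : ℕ) :
    ChooseShiftLE (ℓ (m - 1)).toNat (ℓ m).toNat :=
  (ell_bounds_and_chooseShiftLE h0 hrec m).2.2 m (Nat.le_add_right m 4)

theorem twelve_le_ell (h0 : ℓ 0 = 3) (hrec : EllRecurrence ℓ) (n : ℕ) :
    (12 : ℝ) ≤ ℓ (n + 3) :=
  (ell_bounds_and_chooseShiftLE h0 hrec n).1

theorem three_mul_ell_le (h0 : ℓ 0 = 3) (hrec : EllRecurrence ℓ) (n : ℕ) :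
    3 * (ℓ (n + 3) : ℝ) ≤ ℓ (n + 4) := by
  obtain ⟨hc, hcb, -⟩ := ell_bounds_and_chooseShiftLE h0 hrec n
  nlinarith

theorem ell_sq_bounds (h0 : ℓ 0 = 3) (hrec : EllRecurrence ℓ) (n : ℕ) :
    (ℓ (n + 4) : ℝ) ^ 2 / 2 * (1 - 6 / ℓ (n + 3)) ≤ ℓ (n + 5) ∧
      (ℓ (n + 5) : ℝ) ≤ ℓ (n + 4) ^ 2 / 2 := by
  obtain ⟨hc, hcb, -⟩ := ell_bounds_and_chooseShiftLE h0 hrec n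
  have hb := three_mul_ell_le h0 hrec n
  obtain ⟨hlow, hup⟩ := ell_succ_bounds_s13 hrec (fun m _ => chooseShiftLE_ell h0 hrec m)
    (by exact_mod_cast (by linarith : (0 : ℝ) ≤ ℓ (n + 4)))
    (by exact_mod_cast (by linarith : (0 : ℝ) ≤ ℓ (n + 3)))
  have hmain := sq_mul_sub_six_le_two_mul_mul hc hcb hlow
  constructor
  · rw [one_sub_div (by positivity), ← mul_div_assoc, div_mul_eq_mul_div, div_div,
      div_le_iff₀ (by positivity)]
    linarith
  · linarith

end

theorem ell_asymptotic (ℓ : ℕ → ℤ) (h0 : ℓ 0 = 3)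
    (hrec : ∀ n : ℕ, ℓ (n + 1) =
      1 + ∑ j ∈ Finset.range (n + 1), (-1) ^ j * ((ℓ (n - j)).toNat.choose (j + 2) : ℤ)) :
    ∃ ρ : ℝ, 0 < ρ ∧
      Tendsto (fun n : ℕ => (ℓ n : ℝ) / (2 * (2 : ℝ) ^ (ρ * 2 ^ n))) atTop (nhds 1) := by
  have h12 := twelve_le_ell h0 hrec
  have hgrow := three_mul_ell_le h0 hrec
  have hδ0 : Tendsto (fun n => 6 / (ℓ (n + 3) : ℝ)) atTop (𝓝 0) :=
    tendsto_const_nhds.div_atTop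
      (tendsto_atTop_of_geom_le (by linarith [h12 0]) (by norm_num : (1 : ℝ) < 3) hgrow)
  -- The two-sided bounds hold from index 4 on, so apply the lemma to `ℓ (n + 4)`; its exponent
  -- `ρ * 2 ^ n` is `(ρ / 2 ^ 4) * 2 ^ (n + 4)`.
  obtain ⟨ρ, hρ, hlim⟩ := exists_tendsto_div_two_mul_two_rpow (x := fun n => (ℓ (n + 4) : ℝ))
    (fun n => by linarith [h12 (n + 1)])
    (antitone_nat_of_succ_le fun n => div_le_div_of_nonneg_left (by norm_num)
      (by linarith [h12 n]) (by linarith [h12 n, hgrow n]))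
    hδ0 (fun n => by rw [div_le_iff₀ (by linarith [h12 n])]; linarith [h12 n])
    (fun n => (ell_sq_bounds h0 hrec n).2) fun n => (ell_sq_bounds h0 hrec n).1
  obtain ⟨-, -, hℓ3, hℓ4⟩ := ell_values_s13 h0 hrec
  refine ⟨ρ / 2 ^ 4, ?_, (tendsto_add_atTop_iff_nat 4).1 (hlim.congr fun n => ?_)⟩
  · have h48 : 3 < Real.logb 2 48 :=
      (Real.lt_logb_iff_rpow_lt one_lt_two (by norm_num)).2 (by norm_num)
    norm_num [hℓ3, hℓ4] at hρ
    linarith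
  · rw [pow_add]
    ring_nf
end

section
/- Suppose two LCBC functions Q(N,t) = Σ_s c_s · binom(N + t + s - 1, N - 1) and Q'(N,t) = Σ_s c'_s · binom(N + t + s - 1, N - 1) (finitely many nonzero integer coefficients c_s, c'_s, s ∈ ℤ) agree at t = d for all sufficiently large N. Then c_s = c'_s for all s ≥ -d, and Q(N, d+1) - Q'(N, d+1) = c_{-d-1} - c'_{-d-1} for all sufficiently large N. -/
/-!
Put `a = c - c'` and `F_t(N) = ∑ₛ aₛ · binom(N + t + s - 1, N - 1)`. Pascal's rule gives
`F_{t+1}(N + 1) - F_{t+1}(N) = F_t(N + 1)`, so if `F_{t+1}` vanishes eventually then so does `F_t`.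
Inducting upwards from a `t` so small that every term is zero, eventual vanishing of `F_t`
forces `aₛ = 0` for all `s ≥ -t`: once the coefficients with `s ≥ -t` are known to vanish,
`F_{t+1}(N)` collapses to `a_{-t-1} · binom(N - 1, N - 1) = a_{-t-1}`. This last identity is also
the second half of the theorem.
-/

/-- The binomial coefficient function `binom(N + t + s - 1, N - 1)` for integer arguments,
equal to `0` when the top argument is negative (or less than the bottom). -/
def lcbcTerm (N t s : ℤ) : ℤ :=
  if 0 ≤ N + t + s - 1 then ((N + t + s - 1).toNat.choose (N - 1).toNat : ℤ) else 0

open Filter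

lemma lcbcTerm_eq_zero_of_add_neg {N t s : ℤ} (hN : 1 ≤ N) (h : t + s < 0) :
    lcbcTerm N t s = 0 := by
  unfold lcbcTerm
  split_ifs
  · rw [Nat.choose_eq_zero_of_lt (by omega), Nat.cast_zero]
  · rfl

lemma lcbcTerm_eq_one_of_add_eq_zero {N t s : ℤ} (hN : 1 ≤ N) (h : t + s = 0) :
    lcbcTerm N t s = 1 := by
  rw [lcbcTerm, if_pos (by omega), show N + t + s - 1 = N - 1 by omega, Nat.choose_self,
    Nat.cast_one]

-- Pascal's rule.
lemma lcbcTerm_add_one_add_one {N : ℤ} (hN : 1 ≤ N) (t s : ℤ) :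
    lcbcTerm (N + 1) (t + 1) s = lcbcTerm N (t + 1) s + lcbcTerm (N + 1) t s := by
  unfold lcbcTerm
  have hk : (N + 1 - 1).toNat = (N - 1).toNat + 1 := by omega
  split_ifs <;> try omega
  · have hm : (N + 1 + (t + 1) + s - 1).toNat = (N + t + s).toNat + 1 := by omega
    rw [hm, hk, Nat.choose_succ_succ', Nat.cast_add, show N + (t + 1) + s - 1 = N + t + s by ring,
      show N + 1 + t + s - 1 = N + t + s by ring]
  · rw [Nat.choose_eq_zero_of_lt (by omega), Nat.cast_zero, add_zero]

section

variable {S : Finset ℤ} {a : ℤ → ℤ}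

lemma sum_mul_lcbcTerm_add_one_add_one {N : ℤ} (hN : 1 ≤ N) (t : ℤ) :
    ∑ s ∈ S, a s * lcbcTerm (N + 1) (t + 1) s =
      ∑ s ∈ S, a s * lcbcTerm N (t + 1) s + ∑ s ∈ S, a s * lcbcTerm (N + 1) t s := by
  simp only [lcbcTerm_add_one_add_one hN, mul_add, Finset.sum_add_distrib]

lemma sum_mul_lcbcTerm_add_one_eq (ha : ∀ s ∉ S, a s = 0) {t : ℤ}
    (h : ∀ s, -t ≤ s → a s = 0) {N : ℤ} (hN : 1 ≤ N) :
    ∑ s ∈ S, a s * lcbcTerm N (t + 1) s = a (-t - 1) := by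
  rw [Finset.sum_eq_single (-t - 1), lcbcTerm_eq_one_of_add_eq_zero hN (by ring), mul_one]
  · intro s _ hs
    rcases lt_or_gt_of_ne hs with hs | hs
    · rw [lcbcTerm_eq_zero_of_add_neg hN (by omega), mul_zero]
    · rw [h s (by omega), zero_mul]
  · intro hS
    rw [ha _ hS, zero_mul]

theorem forall_eq_zero_of_eventually_sum_mul_lcbcTerm_eq_zero
    (ha : ∀ s ∉ S, a s = 0) {t : ℤ} (h : ∀ᶠ N in atTop, ∑ s ∈ S, a s * lcbcTerm N t s = 0) :
    ∀ s, -t ≤ s → a s = 0 := by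
  obtain ⟨B, hB⟩ := S.bddAbove
  have hlow : ∀ t ≤ -B - 1, ∀ s, -t ≤ s → a s = 0 := fun t ht s hs =>
    ha s fun hsS => by have := hB hsS; omega
  rcases le_total t (-B - 1) with ht | ht
  · exact hlow t ht
  induction t, ht using Int.leInduction with
  | base => exact hlow _ le_rfl
  | succ t _ ih =>
    have hdiff : ∀ᶠ N in atTop, ∑ s ∈ S, a s * lcbcTerm N t s = 0 := by
      obtain ⟨N₀, hN₀⟩ := eventually_atTop.1 h
      refine eventually_atTop.2 ⟨max N₀ 1 + 1, fun N hN => ?_⟩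
      obtain ⟨M, rfl⟩ : ∃ M, N = M + 1 := ⟨N - 1, by ring⟩
      have h₁ := hN₀ (M + 1) (by omega)
      rw [sum_mul_lcbcTerm_add_one_add_one (by omega), hN₀ M (by omega), zero_add] at h₁
      exact h₁
    have hhigh := ih hdiff
    obtain ⟨N, hN, hN1⟩ := (h.and (eventually_ge_atTop 1)).exists
    rw [sum_mul_lcbcTerm_add_one_eq ha hhigh hN1] at hN
    intro s hs
    rcases hs.eq_or_lt with rfl | hs
    · rwa [show -(t + 1) = -t - 1 by ring]
    · exact hhigh s (by omega)

end

theorem lcbc_agreement (S : Finset ℤ) (c c' : ℤ → ℤ)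
    (hc : ∀ s ∉ S, c s = 0) (hc' : ∀ s ∉ S, c' s = 0) (d : ℤ)
    (hagree : ∃ N₀ : ℤ, ∀ N : ℤ, N₀ ≤ N →
      ∑ s ∈ S, c s * lcbcTerm N d s = ∑ s ∈ S, c' s * lcbcTerm N d s) :
    (∀ s : ℤ, -d ≤ s → c s = c' s) ∧
      ∃ N₁ : ℤ, ∀ N : ℤ, N₁ ≤ N →
        ∑ s ∈ S, c s * lcbcTerm N (d + 1) s - ∑ s ∈ S, c' s * lcbcTerm N (d + 1) s =
          c (-d - 1) - c' (-d - 1) := by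
  have hsub (t N : ℤ) : ∑ s ∈ S, c s * lcbcTerm N t s - ∑ s ∈ S, c' s * lcbcTerm N t s =
      ∑ s ∈ S, (c s - c' s) * lcbcTerm N t s := by
    simp only [sub_mul, Finset.sum_sub_distrib]
  have hsupp : ∀ s ∉ S, c s - c' s = 0 := fun s hs => by rw [hc s hs, hc' s hs, sub_self]
  obtain ⟨N₀, hN₀⟩ := hagree
  have hzero : ∀ s, -d ≤ s → c s - c' s = 0 :=
    forall_eq_zero_of_eventually_sum_mul_lcbcTerm_eq_zero hsupp <|
      eventually_atTop.2 ⟨N₀, fun N hN => by rw [← hsub, hN₀ N hN, sub_self]⟩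
  exact ⟨fun s hs => sub_eq_zero.1 (hzero s hs), 1, fun N hN => by
    rw [hsub, sum_mul_lcbcTerm_add_one_eq hsupp hzero hN]⟩
end
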